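/- arXiv:2604.04227 — 2 statements merged into one kernel-verified Lean document; each statement's English description precedes it below -/
import Mathlib

section
/- (Brenier) Let X and Y be closed subsets of ℝ^d, let μ be a Borel probability measure on X absolutely continuous with respect to Lebesgue measure, and let ν be a Borel probability measure on Y, with ∫ ‖x‖² dμ(x) < ∞ and ∫ ‖y‖² dν(y) < ∞. Let ϑ be a convex function whose gradient pushes μ forward to ν. Then the deterministic coupling given by the law of (X, ∇ϑ(X)) with X ∼ μ is the unique optimal transport plan for the quadratic cost c(x,y) = ‖x−y‖²/2, i.e., ∫ ‖x − ∇ϑ(x)‖²/2 dμ(x) = inf_{π ∈ M(μ,ν)} ∫ ‖x−y‖²/2 dπ(x,y), and any optimal coupling coincides with this one. -/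
/-! The Fenchel conjugate `ϑ*` gives `⟪x, y⟫ ≤ ϑ x + ϑ* y`, with equality only when `y` is a
subgradient of `ϑ` at `x`, that is `y = ∇ϑ x` wherever `ϑ` is differentiable. Since
`‖x - y‖² / 2 = ‖x‖² / 2 + ‖y‖² / 2 - ⟪x, y⟫`, the cost of any coupling of `μ` and `ν = (∇ϑ)_# μ`
is the cost of `(id, ∇ϑ)_# μ` plus the integral of the nonnegative gap `ϑ x + ϑ* y - ⟪x, y⟫`,
which vanishes on the graph of `∇ϑ`. A coupling without gap lives on that graph, because the
convex function `ϑ` is locally Lipschitz, hence differentiable `μ`-a.e. by Rademacher's theorem. -/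

open MeasureTheory Set

/-- A coupling of `(μ, ν)`: a measure on the product whose marginals are `μ` and `ν`. -/
def IsCoupling {X Y : Type*} [MeasurableSpace X] [MeasurableSpace Y]
    (π : Measure (X × Y)) (μ : Measure X) (ν : Measure Y) : Prop :=
  π.map Prod.fst = μ ∧ π.map Prod.snd = ν

open InnerProductSpace
open scoped RealInnerProductSpace

theorem LocallyLipschitz.ae_differentiableAt {E F : Type*} [NormedAddCommGroup E]
    [NormedSpace ℝ E] [FiniteDimensional ℝ E] [MeasurableSpace E] [BorelSpace E]
    [NormedAddCommGroup F] [NormedSpace ℝ F] [FiniteDimensional ℝ F] {f : E → F}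
    (hf : LocallyLipschitz f) (μ : Measure E) [μ.IsAddHaarMeasure] :
    ∀ᵐ x ∂μ, DifferentiableAt ℝ f x := by
  refine measure_null_of_locally_null _ fun x _ => ?_
  obtain ⟨K, t, ht, hK⟩ := hf x
  refine ⟨{y | ¬DifferentiableAt ℝ f y} ∩ interior t,
    inter_mem_nhdsWithin _ (interior_mem_nhds.2 ht), measure_mono_null ?_
      (ae_iff.1 (hK.mono interior_subset).ae_differentiableWithinAt_of_mem)⟩
  rintro y ⟨hy, hyt⟩ h
  exact hy ((h hyt).differentiableAt (isOpen_interior.mem_nhds hyt))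

section ConvexConjugate

variable {E : Type*} [NormedAddCommGroup E] [InnerProductSpace ℝ E] {ϑ : E → ℝ} {x y : E}

/-- Valued in `EReal`, so that no junk value appears where the supremum is infinite; as a
supremum of continuous functions it is lower semicontinuous, hence Borel. -/
noncomputable def fenchelConjugate (ϑ : E → ℝ) (y : E) : EReal :=
  ⨆ x, ((⟪x, y⟫ - ϑ x : ℝ) : EReal)

noncomputable def fenchelGap (ϑ : E → ℝ) (x y : E) : ℝ :=
  ϑ x + (fenchelConjugate ϑ y).toReal - ⟪x, y⟫

theorem measurable_fenchelConjugate [MeasurableSpace E] [OpensMeasurableSpace E] (ϑ : E → ℝ) :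
    Measurable (fenchelConjugate ϑ) :=
  (lowerSemicontinuous_iSup fun _ => (continuous_coe_real_ereal.comp
    ((continuous_const.inner continuous_id).sub continuous_const)).lowerSemicontinuous).measurable

theorem fenchelGap_nonneg (hy : fenchelConjugate ϑ y ≠ ⊤) (x : E) : 0 ≤ fenchelGap ϑ x y := by
  have h : ((⟪x, y⟫ - ϑ x : ℝ) : EReal) ≤ (fenchelConjugate ϑ y).toReal :=
    (le_iSup (fun x => ((⟪x, y⟫ - ϑ x : ℝ) : EReal)) x).trans (EReal.le_coe_toReal hy)
  have := EReal.coe_le_coe_iff.1 h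
  unfold fenchelGap
  linarith

variable [CompleteSpace E]

theorem ConvexOn.add_inner_gradient_le (hϑ : ConvexOn ℝ univ ϑ) (hx : DifferentiableAt ℝ ϑ x)
    (z : E) : ϑ x + ⟪gradient ϑ x, z - x⟫ ≤ ϑ z := by
  have hline : ConvexOn ℝ univ (ϑ ∘ AffineMap.lineMap (k := ℝ) x z) := by
    simpa using hϑ.comp_affineMap (AffineMap.lineMap (k := ℝ) x z)
  have hderiv : HasDerivAt (ϑ ∘ AffineMap.lineMap (k := ℝ) x z) ⟪gradient ϑ x, z - x⟫ 0 := by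
    have hx' : HasFDerivAt ϑ (toDual ℝ E (gradient ϑ x)) (AffineMap.lineMap x z (0 : ℝ)) := by
      simpa using hx.hasGradientAt.hasFDerivAt
    simpa using hx'.comp_hasDerivAt (0 : ℝ) AffineMap.hasDerivAt_lineMap
  have := hline.le_slope_of_hasDerivAt (mem_univ 0) (mem_univ 1) one_pos hderiv
  simp only [slope_def_field, Function.comp_apply, AffineMap.lineMap_apply_zero,
    AffineMap.lineMap_apply_one, sub_zero, div_one] at this
  linarith

theorem DifferentiableAt.eq_gradient_of_add_inner_le (hx : DifferentiableAt ℝ ϑ x)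
    (hy : ∀ z, ϑ x + ⟪y, z - x⟫ ≤ ϑ z) : y = gradient ϑ x := by
  have hmin : IsLocalMin (fun z => ϑ z - ⟪y, z⟫) x := Filter.Eventually.of_forall fun z => by
    have := hy z
    rw [inner_sub_right] at this
    linarith
  have hd : HasFDerivAt (fun z => ϑ z - ⟪y, z⟫) (toDual ℝ E (gradient ϑ x) - toDual ℝ E y) x :=
    hx.hasGradientAt.hasFDerivAt.sub (toDual ℝ E y).hasFDerivAt
  exact ((toDual ℝ E).injective (sub_eq_zero.1 (hmin.hasFDerivAt_eq_zero hd))).symm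

theorem ConvexOn.abs_le_of_differentiableAt (hϑ : ConvexOn ℝ univ ϑ) {x₀ x : E}
    (hx₀ : DifferentiableAt ℝ ϑ x₀) (hx : DifferentiableAt ℝ ϑ x) :
    |ϑ x| ≤ |ϑ x₀| + ‖gradient ϑ x₀‖ ^ 2 + ‖x₀‖ ^ 2 + ‖x‖ ^ 2 + ‖gradient ϑ x‖ ^ 2 := by
  have hinner : ∀ a b c : E, |⟪a, b - c⟫| ≤ ‖a‖ ^ 2 + ‖b‖ ^ 2 + ‖c‖ ^ 2 := fun a b c => by
    refine (abs_real_inner_le_norm _ _).trans ?_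
    nlinarith [norm_sub_le b c, norm_nonneg a, sq_nonneg (‖a‖ - ‖b‖), sq_nonneg (‖a‖ - ‖c‖)]
  have hlow := hϑ.add_inner_gradient_le hx₀ x
  have hup := hϑ.add_inner_gradient_le hx x₀
  obtain ⟨h₀, h₀'⟩ := abs_le.1 (hinner (gradient ϑ x₀) x x₀)
  obtain ⟨h₁, h₁'⟩ := abs_le.1 (hinner (gradient ϑ x) x₀ x)
  rw [abs_le]
  constructor <;> linarith [neg_abs_le (ϑ x₀), le_abs_self (ϑ x₀), sq_nonneg ‖gradient ϑ x₀‖,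
    sq_nonneg ‖gradient ϑ x‖]

theorem ConvexOn.fenchelConjugate_gradient (hϑ : ConvexOn ℝ univ ϑ)
    (hx : DifferentiableAt ℝ ϑ x) :
    fenchelConjugate ϑ (gradient ϑ x) = ((⟪x, gradient ϑ x⟫ - ϑ x : ℝ) : EReal) := by
  refine le_antisymm (iSup_le fun z => EReal.coe_le_coe_iff.2 ?_)
    (le_iSup (fun z => ((⟪z, gradient ϑ x⟫ - ϑ z : ℝ) : EReal)) x)
  have := hϑ.add_inner_gradient_le hx z
  rw [inner_sub_right, real_inner_comm z, real_inner_comm x] at this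
  linarith

theorem ConvexOn.fenchelGap_gradient (hϑ : ConvexOn ℝ univ ϑ) (hx : DifferentiableAt ℝ ϑ x) :
    fenchelGap ϑ x (gradient ϑ x) = 0 := by
  rw [fenchelGap, hϑ.fenchelConjugate_gradient hx, EReal.toReal_coe]
  ring

theorem DifferentiableAt.eq_gradient_of_fenchelGap_eq_zero (hx : DifferentiableAt ℝ ϑ x)
    (hy : fenchelConjugate ϑ y ≠ ⊤) (h : fenchelGap ϑ x y = 0) : y = gradient ϑ x := by
  refine hx.eq_gradient_of_add_inner_le fun z => ?_
  have := fenchelGap_nonneg hy z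
  rw [inner_sub_right, real_inner_comm x, real_inner_comm z]
  unfold fenchelGap at h this
  linarith

end ConvexConjugate

namespace IsCoupling

variable {X Y : Type*} [MeasurableSpace X] [MeasurableSpace Y] {π : Measure (X × Y)}
  {μ : Measure X} {ν : Measure Y}

theorem ae_fst (hπ : IsCoupling π μ ν) {p : X → Prop} (hp : ∀ᵐ x ∂μ, p x) :
    ∀ᵐ z ∂π, p z.1 :=
  ae_of_ae_map measurable_fst.aemeasurable (hπ.1 ▸ hp)

theorem ae_snd (hπ : IsCoupling π μ ν) {p : Y → Prop} (hp : ∀ᵐ y ∂ν, p y) :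
    ∀ᵐ z ∂π, p z.2 :=
  ae_of_ae_map measurable_snd.aemeasurable (hπ.2 ▸ hp)

variable {G : Type*} [NormedAddCommGroup G]

theorem integrable_comp_fst (hπ : IsCoupling π μ ν) {f : X → G} (hf : Integrable f μ) :
    Integrable (fun z => f z.1) π :=
  (hπ.1 ▸ hf).comp_measurable measurable_fst

theorem integrable_comp_snd (hπ : IsCoupling π μ ν) {f : Y → G} (hf : Integrable f ν) :
    Integrable (fun z => f z.2) π :=
  (hπ.2 ▸ hf).comp_measurable measurable_snd

variable [NormedSpace ℝ G]

theorem integral_comp_fst (hπ : IsCoupling π μ ν) {f : X → G} (hf : AEStronglyMeasurable f μ) :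
    ∫ z, f z.1 ∂π = ∫ x, f x ∂μ := by
  rw [← integral_map measurable_fst.aemeasurable (hπ.1 ▸ hf), hπ.1]

theorem integral_comp_snd (hπ : IsCoupling π μ ν) {f : Y → G} (hf : AEStronglyMeasurable f ν) :
    ∫ z, f z.2 ∂π = ∫ y, f y ∂ν := by
  rw [← integral_map measurable_snd.aemeasurable (hπ.2 ▸ hf), hπ.2]

theorem map_graph {f : X → Y} (hf : Measurable f) :
    IsCoupling (μ.map fun x => (x, f x)) μ (μ.map f) := by
  constructor
  · rw [Measure.map_map measurable_fst (measurable_id'.prodMk hf)]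
    exact Measure.map_id
  · rw [Measure.map_map measurable_snd (measurable_id'.prodMk hf)]
    rfl

theorem eq_map_graph (hπ : IsCoupling π μ ν) {f : X → Y} (hf : Measurable f)
    (h : ∀ᵐ z ∂π, z.2 = f z.1) : π = μ.map fun x => (x, f x) := by
  calc π = π.map fun z => (z.1, f z.1) := by
        conv_lhs => rw [← Measure.map_id (μ := π)]
        exact Measure.map_congr (h.mono fun z hz => Prod.ext rfl hz)
    _ = μ.map fun x => (x, f x) := by
        rw [← hπ.1, Measure.map_map (measurable_id'.prodMk hf) measurable_fst]
        rfl

end IsCoupling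

theorem integrable_inner_of_integrable_norm_sq {α E : Type*} [MeasurableSpace α] {μ : Measure α}
    [NormedAddCommGroup E] [InnerProductSpace ℝ E] {f g : α → E}
    (hf : AEStronglyMeasurable f μ) (hg : AEStronglyMeasurable g μ)
    (hf2 : Integrable (fun a => ‖f a‖ ^ 2) μ) (hg2 : Integrable (fun a => ‖g a‖ ^ 2) μ) :
    Integrable (fun a => ⟪f a, g a⟫) μ := by
  refine (hf2.add hg2).mono' (hf.inner hg) (ae_of_all _ fun a => ?_)
  show |⟪f a, g a⟫| ≤ ‖f a‖ ^ 2 + ‖g a‖ ^ 2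
  refine (abs_real_inner_le_norm _ _).trans ?_
  nlinarith [sq_nonneg (‖f a‖ - ‖g a‖)]

section OptimalTransport

variable {E : Type*} [NormedAddCommGroup E] [InnerProductSpace ℝ E] [FiniteDimensional ℝ E]
  [MeasurableSpace E] [BorelSpace E] {μ ν : Measure E} {ϑ : E → ℝ} {π : Measure (E × E)}

theorem measurable_gradient (ϑ : E → ℝ) : Measurable (gradient ϑ) :=
  (toDual ℝ E).symm.continuous.measurable.comp (measurable_fderiv ℝ ϑ)

theorem IsCoupling.integrable_inner (hπ : IsCoupling π μ ν)
    (hμ2 : Integrable (fun x => ‖x‖ ^ 2) μ) (hν2 : Integrable (fun y => ‖y‖ ^ 2) ν) :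
    Integrable (fun z => ⟪z.1, z.2⟫) π :=
  integrable_inner_of_integrable_norm_sq measurable_fst.aestronglyMeasurable
    measurable_snd.aestronglyMeasurable (hπ.integrable_comp_fst hμ2) (hπ.integrable_comp_snd hν2)

theorem IsCoupling.integrable_add_sub_inner (hπ : IsCoupling π μ ν)
    (hμ2 : Integrable (fun x => ‖x‖ ^ 2) μ) (hν2 : Integrable (fun y => ‖y‖ ^ 2) ν)
    {f g : E → ℝ} (hf : Integrable f μ) (hg : Integrable g ν) :
    Integrable (fun z => f z.1 + g z.2 - ⟪z.1, z.2⟫) π :=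
  ((hπ.integrable_comp_fst hf).add (hπ.integrable_comp_snd hg)).sub (hπ.integrable_inner hμ2 hν2)

theorem IsCoupling.integral_norm_sub_sq_div_two (hπ : IsCoupling π μ ν)
    (hμ2 : Integrable (fun x => ‖x‖ ^ 2) μ) (hν2 : Integrable (fun y => ‖y‖ ^ 2) ν)
    {f g : E → ℝ} (hf : Integrable f μ) (hg : Integrable g ν) :
    ∫ z, ‖z.1 - z.2‖ ^ 2 / 2 ∂π = ∫ z, (f z.1 + g z.2 - ⟪z.1, z.2⟫) ∂π
      + (∫ x, (‖x‖ ^ 2 / 2 - f x) ∂μ + ∫ y, (‖y‖ ^ 2 / 2 - g y) ∂ν) := by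
  have hμf : Integrable (fun x => ‖x‖ ^ 2 / 2 - f x) μ := (hμ2.div_const 2).sub hf
  have hνg : Integrable (fun y => ‖y‖ ^ 2 / 2 - g y) ν := (hν2.div_const 2).sub hg
  have hsplit : (fun z : E × E => ‖z.1 - z.2‖ ^ 2 / 2) = fun z =>
      (f z.1 + g z.2 - ⟪z.1, z.2⟫) + ((‖z.1‖ ^ 2 / 2 - f z.1) + (‖z.2‖ ^ 2 / 2 - g z.2)) := by
    funext z
    rw [norm_sub_sq_real]
    ring
  have hmarg : Integrable (fun z : E × E => (‖z.1‖ ^ 2 / 2 - f z.1) + (‖z.2‖ ^ 2 / 2 - g z.2)) π :=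
    (hπ.integrable_comp_fst hμf).add (hπ.integrable_comp_snd hνg)
  rw [hsplit, integral_add (hπ.integrable_add_sub_inner hμ2 hν2 hf hg) hmarg,
    integral_add (hπ.integrable_comp_fst hμf) (hπ.integrable_comp_snd hνg),
    hπ.integral_comp_fst hμf.1, hπ.integral_comp_snd hνg.1]

theorem integral_norm_sub_sq_div_two_map_graph {f : E → E} (hf : Measurable f) :
    ∫ z, ‖z.1 - z.2‖ ^ 2 / 2 ∂(μ.map fun x => (x, f x)) = ∫ x, ‖x - f x‖ ^ 2 / 2 ∂μ :=
  integral_map (measurable_id'.prodMk hf).aemeasurable (by fun_prop : Continuous fun z : E × E =>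
    ‖z.1 - z.2‖ ^ 2 / 2).aestronglyMeasurable

theorem ae_fenchelConjugate_ne_top (hϑ : ConvexOn ℝ univ ϑ)
    (hdiff : ∀ᵐ x ∂μ, DifferentiableAt ℝ ϑ x) :
    ∀ᵐ y ∂μ.map (gradient ϑ), fenchelConjugate ϑ y ≠ ⊤ := by
  have hm : MeasurableSet {y | fenchelConjugate ϑ y ≠ ⊤} :=
    measurable_fenchelConjugate ϑ (measurableSet_singleton ⊤).compl
  rw [ae_map_iff (measurable_gradient ϑ).aemeasurable hm]
  filter_upwards [hdiff] with x hx
  rw [hϑ.fenchelConjugate_gradient hx]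
  exact EReal.coe_ne_top _

theorem IsCoupling.ae_fenchelGap_nonneg (hϑ : ConvexOn ℝ univ ϑ)
    (hdiff : ∀ᵐ x ∂μ, DifferentiableAt ℝ ϑ x) (hπ : IsCoupling π μ (μ.map (gradient ϑ))) :
    ∀ᵐ z ∂π, 0 ≤ fenchelGap ϑ z.1 z.2 :=
  (hπ.ae_snd (ae_fenchelConjugate_ne_top hϑ hdiff)).mono fun z hz => fenchelGap_nonneg hz z.1

variable [IsFiniteMeasure μ]

theorem ConvexOn.integrable (hϑ : ConvexOn ℝ univ ϑ)
    (hdiff : ∀ᵐ x ∂μ, DifferentiableAt ℝ ϑ x) (hμ2 : Integrable (fun x => ‖x‖ ^ 2) μ)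
    (hg2 : Integrable (fun x => ‖gradient ϑ x‖ ^ 2) μ) : Integrable ϑ μ := by
  rcases eq_zero_or_neZero μ with rfl | _
  · exact integrable_zero_measure
  obtain ⟨x₀, hx₀⟩ := hdiff.exists
  refine ((integrable_const (|ϑ x₀| + ‖gradient ϑ x₀‖ ^ 2 + ‖x₀‖ ^ 2)).add (hμ2.add hg2)).mono'
    hϑ.locallyLipschitz.continuous.aestronglyMeasurable ?_
  filter_upwards [hdiff] with x hx
  have := hϑ.abs_le_of_differentiableAt hx₀ hx
  simp only [Real.norm_eq_abs, Pi.add_apply]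
  linarith

theorem integrable_fenchelConjugate_toReal (hϑ : ConvexOn ℝ univ ϑ)
    (hdiff : ∀ᵐ x ∂μ, DifferentiableAt ℝ ϑ x) (hμ2 : Integrable (fun x => ‖x‖ ^ 2) μ)
    (hν2 : Integrable (fun y => ‖y‖ ^ 2) (μ.map (gradient ϑ))) :
    Integrable (fun y => (fenchelConjugate ϑ y).toReal) (μ.map (gradient ϑ)) := by
  have hg2 : Integrable (fun x => ‖gradient ϑ x‖ ^ 2) μ :=
    hν2.comp_measurable (measurable_gradient ϑ)
  refine (integrable_map_measure (measurable_ereal_toReal.comp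
    (measurable_fenchelConjugate ϑ)).aestronglyMeasurable
    (measurable_gradient ϑ).aemeasurable).2 ?_
  refine ((integrable_inner_of_integrable_norm_sq aestronglyMeasurable_id
    (measurable_gradient ϑ).aestronglyMeasurable hμ2 hg2).sub
    (hϑ.integrable hdiff hμ2 hg2)).congr ?_
  filter_upwards [hdiff] with x hx
  simp only [Pi.sub_apply, Function.comp_apply, id, hϑ.fenchelConjugate_gradient hx,
    EReal.toReal_coe]

theorem IsCoupling.integrable_fenchelGap (hϑ : ConvexOn ℝ univ ϑ)
    (hdiff : ∀ᵐ x ∂μ, DifferentiableAt ℝ ϑ x) (hμ2 : Integrable (fun x => ‖x‖ ^ 2) μ)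
    (hν2 : Integrable (fun y => ‖y‖ ^ 2) (μ.map (gradient ϑ)))
    (hπ : IsCoupling π μ (μ.map (gradient ϑ))) :
    Integrable (fun z => fenchelGap ϑ z.1 z.2) π :=
  hπ.integrable_add_sub_inner hμ2 hν2
    (hϑ.integrable hdiff hμ2 (hν2.comp_measurable (measurable_gradient ϑ)))
    (integrable_fenchelConjugate_toReal hϑ hdiff hμ2 hν2)

theorem IsCoupling.integral_norm_sub_sq_div_two_eq_add_integral_fenchelGap
    (hϑ : ConvexOn ℝ univ ϑ) (hdiff : ∀ᵐ x ∂μ, DifferentiableAt ℝ ϑ x)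
    (hμ2 : Integrable (fun x => ‖x‖ ^ 2) μ)
    (hν2 : Integrable (fun y => ‖y‖ ^ 2) (μ.map (gradient ϑ)))
    (hπ : IsCoupling π μ (μ.map (gradient ϑ))) :
    ∫ z, ‖z.1 - z.2‖ ^ 2 / 2 ∂π
      = ∫ x, ‖x - gradient ϑ x‖ ^ 2 / 2 ∂μ + ∫ z, fenchelGap ϑ z.1 z.2 ∂π := by
  have hϑi := hϑ.integrable hdiff hμ2 (hν2.comp_measurable (measurable_gradient ϑ))
  have hφi := integrable_fenchelConjugate_toReal hϑ hdiff hμ2 hν2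
  have hπ₀ := IsCoupling.map_graph (μ := μ) (measurable_gradient ϑ)
  have hgap₀ : ∫ z, fenchelGap ϑ z.1 z.2 ∂(μ.map fun x => (x, gradient ϑ x)) = 0 := by
    rw [integral_map (measurable_id'.prodMk (measurable_gradient ϑ)).aemeasurable
      (hπ₀.integrable_fenchelGap hϑ hdiff hμ2 hν2).1]
    exact integral_eq_zero_of_ae (hdiff.mono fun x hx => hϑ.fenchelGap_gradient hx)
  have h := hπ.integral_norm_sub_sq_div_two hμ2 hν2 hϑi hφi
  have h₀ := hπ₀.integral_norm_sub_sq_div_two hμ2 hν2 hϑi hφi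
  rw [integral_norm_sub_sq_div_two_map_graph (measurable_gradient ϑ)] at h₀
  simp only [fenchelGap] at hgap₀ ⊢
  linarith

theorem IsCoupling.eq_map_gradient_of_integral_fenchelGap_eq_zero (hϑ : ConvexOn ℝ univ ϑ)
    (hdiff : ∀ᵐ x ∂μ, DifferentiableAt ℝ ϑ x) (hμ2 : Integrable (fun x => ‖x‖ ^ 2) μ)
    (hν2 : Integrable (fun y => ‖y‖ ^ 2) (μ.map (gradient ϑ)))
    (hπ : IsCoupling π μ (μ.map (gradient ϑ))) (h : ∫ z, fenchelGap ϑ z.1 z.2 ∂π = 0) :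
    π = μ.map fun x => (x, gradient ϑ x) := by
  have hzero := (integral_eq_zero_iff_of_nonneg_ae (hπ.ae_fenchelGap_nonneg hϑ hdiff)
    (hπ.integrable_fenchelGap hϑ hdiff hμ2 hν2)).1 h
  refine hπ.eq_map_graph (measurable_gradient ϑ) ?_
  filter_upwards [hzero, hπ.ae_fst hdiff, hπ.ae_snd (ae_fenchelConjugate_ne_top hϑ hdiff)]
    with z hz hdz htop
  exact hdz.eq_gradient_of_fenchelGap_eq_zero htop hz

end OptimalTransport

theorem brenier_optimality_general
    {d : ℕ}
    (μ ν : Measure (EuclideanSpace ℝ (Fin d)))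
    [IsProbabilityMeasure μ]
    (hac : μ ≪ volume)
    (hμ2 : Integrable (fun x => ‖x‖ ^ 2) μ) (hν2 : Integrable (fun y => ‖y‖ ^ 2) ν)
    (ϑ : EuclideanSpace ℝ (Fin d) → ℝ) (hϑ : ConvexOn ℝ univ ϑ)
    (hpush : μ.map (gradient ϑ) = ν) :
    (∫ x, ‖x - gradient ϑ x‖ ^ 2 / 2 ∂μ
        = sInf {r : ℝ |
            ∃ π : Measure (EuclideanSpace ℝ (Fin d) × EuclideanSpace ℝ (Fin d)),
              IsCoupling π μ ν ∧ r = ∫ z, ‖z.1 - z.2‖ ^ 2 / 2 ∂π})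
    ∧ (∀ π : Measure (EuclideanSpace ℝ (Fin d) × EuclideanSpace ℝ (Fin d)),
        IsCoupling π μ ν →
        (∀ π' : Measure (EuclideanSpace ℝ (Fin d) × EuclideanSpace ℝ (Fin d)),
          IsCoupling π' μ ν → ∫ z, ‖z.1 - z.2‖ ^ 2 / 2 ∂π ≤ ∫ z, ‖z.1 - z.2‖ ^ 2 / 2 ∂π') →
        π = μ.map (fun x => (x, gradient ϑ x))) := by
  have hdiff : ∀ᵐ x ∂μ, DifferentiableAt ℝ ϑ x :=
    hac.ae_le (hϑ.locallyLipschitz.ae_differentiableAt volume)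
  subst hpush
  have hπ₀ := IsCoupling.map_graph (μ := μ) (measurable_gradient ϑ)
  have hcost₀ := integral_norm_sub_sq_div_two_map_graph (μ := μ) (measurable_gradient ϑ)
  have hcost := fun π (hπ : IsCoupling π μ (μ.map (gradient ϑ))) =>
    hπ.integral_norm_sub_sq_div_two_eq_add_integral_fenchelGap hϑ hdiff hμ2 hν2
  have hgap := fun π (hπ : IsCoupling π μ (μ.map (gradient ϑ))) =>
    integral_nonneg_of_ae (hπ.ae_fenchelGap_nonneg hϑ hdiff)
  refine ⟨(IsLeast.csInf_eq ?_).symm, fun π hπ hopt => ?_⟩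
  · refine ⟨⟨_, hπ₀, hcost₀.symm⟩, ?_⟩
    rintro _ ⟨π, hπ, rfl⟩
    linarith [hcost π hπ, hgap π hπ]
  · refine hπ.eq_map_gradient_of_integral_fenchelGap_eq_zero hϑ hdiff hμ2 hν2
      (le_antisymm ?_ (hgap π hπ))
    linarith [hcost π hπ, hopt _ hπ₀]

/-- Brenier's theorem: if `μ` is absolutely continuous, both measures have finite second
moments, and `ϑ` is a convex function whose gradient pushes `μ` forward to `ν`, then the
deterministic coupling `(X, ∇ϑ(X))` is the unique optimal transport plan for the quadratic
cost `‖x - y‖²/2`. -/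
theorem brenier_optimality
    {d : ℕ}
    (SX SY : Set (EuclideanSpace ℝ (Fin d))) (hSX : IsClosed SX) (hSY : IsClosed SY)
    (μ ν : Measure (EuclideanSpace ℝ (Fin d)))
    [IsProbabilityMeasure μ] [IsProbabilityMeasure ν]
    (hμS : μ SXᶜ = 0) (hνS : ν SYᶜ = 0)
    (hac : μ ≪ volume)
    (hμ2 : Integrable (fun x => ‖x‖ ^ 2) μ) (hν2 : Integrable (fun y => ‖y‖ ^ 2) ν)
    (ϑ : EuclideanSpace ℝ (Fin d) → ℝ) (hϑ : ConvexOn ℝ univ ϑ)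
    (hpush : μ.map (gradient ϑ) = ν) :
    (∫ x, ‖x - gradient ϑ x‖ ^ 2 / 2 ∂μ
        = sInf {r : ℝ |
            ∃ π : Measure (EuclideanSpace ℝ (Fin d) × EuclideanSpace ℝ (Fin d)),
              IsCoupling π μ ν ∧ r = ∫ z, ‖z.1 - z.2‖ ^ 2 / 2 ∂π})
    ∧ (∀ π : Measure (EuclideanSpace ℝ (Fin d) × EuclideanSpace ℝ (Fin d)),
        IsCoupling π μ ν →
        (∀ π' : Measure (EuclideanSpace ℝ (Fin d) × EuclideanSpace ℝ (Fin d)),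
          IsCoupling π' μ ν → ∫ z, ‖z.1 - z.2‖ ^ 2 / 2 ∂π ≤ ∫ z, ‖z.1 - z.2‖ ^ 2 / 2 ∂π') →
        π = μ.map (fun x => (x, gradient ϑ x))) :=
  brenier_optimality_general μ ν hac hμ2 hν2 ϑ hϑ hpush
end

section
/- For every p ∈ [1,∞) and all Borel probability measures μ and ν on ℝ with finite p-th moments, the p-Wasserstein distance equals the L^p distance between quantile functions: W_p(μ,ν) = ( ∫₀¹ |Q_μ(t) − Q_ν(t)|^p dt )^{1/p}. -/
open MeasureTheory Set

/-- The quantile function `Q_μ(t) = inf { x : F_μ(x) ≥ t }` of a measure on `ℝ`. -/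
noncomputable def quantile (μ : Measure ℝ) (t : ℝ) : ℝ :=
  sInf {x : ℝ | t ≤ (μ (Iic x)).toReal}

/-!
For reals `x, y` the quantity `(x - y)⁺ ^ p` is the mass, for Lebesgue measure in `a` times the
Stieltjes measure of `r ↦ p (r⁺) ^ (p - 1)`, of the parameters `(a, r)` with `y ≤ a` and
`a + r < x` (layer-cake formula). By Tonelli the cost `∫ (x - y)⁺ ^ p dπ` of a coupling `π` is
therefore an integral of quadrant masses `π {x > c, y ≤ d}`. Every coupling gives such a quadrant
mass at least `ν (Iic d) - μ (Iic c)` (Fréchet–Hoeffding), and the comonotone coupling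
`t ↦ (Q_μ t, Q_ν t)` of the uniform measure on `(0, 1)` attains this bound because
`Q_μ t ≤ x ↔ t ≤ F_μ x`. Applying this to `(x - y)⁺` and `(y - x)⁺`, the quantile coupling is
optimal, and its cost is the quantile integral.
-/

open Filter Topology ProbabilityTheory

namespace IsCoupling

variable {X Y : Type*} [MeasurableSpace X] [MeasurableSpace Y]
  {π : Measure (X × Y)} {μ : Measure X} {ν : Measure Y}

lemma isProbabilityMeasure [IsProbabilityMeasure μ] (hπ : IsCoupling π μ ν) :
    IsProbabilityMeasure π := by
  constructor
  rw [← preimage_univ (f := Prod.fst), ← Measure.map_apply measurable_fst MeasurableSet.univ,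
    hπ.1, measure_univ]

lemma swap (hπ : IsCoupling π μ ν) : IsCoupling (π.map Prod.swap) ν μ :=
  ⟨by rw [Measure.map_map measurable_fst measurable_swap]; exact hπ.2,
    by rw [Measure.map_map measurable_snd measurable_swap]; exact hπ.1⟩

lemma sub_le_apply_compl_prod (hπ : IsCoupling π μ ν) (A : Set X) {B : Set Y}
    (hB : MeasurableSet B) : ν B - μ A ≤ π (Aᶜ ×ˢ B) := by
  refine tsub_le_iff_left.2 ?_
  calc ν B = π (univ ×ˢ B) := by rw [← hπ.2, Measure.map_apply measurable_snd hB, univ_prod]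
    _ ≤ π (A ×ˢ B) + π (Aᶜ ×ˢ B) := by
      rw [← union_compl_self A, union_prod]; exact measure_union_le _ _
    _ ≤ μ A + π (Aᶜ ×ˢ B) := by
      gcongr
      rw [← hπ.1]
      exact (measure_mono fun z hz => hz.1).trans (Measure.le_map_apply
        measurable_fst.aemeasurable A)

end IsCoupling

lemma memLp_id_of_integrable_abs_rpow {p : ℝ} (hp : 0 < p) {μ : Measure ℝ}
    (h : Integrable (fun x => |x| ^ p) μ) : MemLp id (ENNReal.ofReal p) μ :=
  (integrable_norm_rpow_iff aestronglyMeasurable_id (ENNReal.ofReal_pos.2 hp).ne'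
    ENNReal.ofReal_ne_top).1 (by simpa [ENNReal.toReal_ofReal hp.le] using h)

lemma IsCoupling.integrable_abs_sub_rpow {p : ℝ} (hp : 0 < p) {μ ν : Measure ℝ}
    {π : Measure (ℝ × ℝ)} (hπ : IsCoupling π μ ν)
    (hμp : Integrable (fun x => |x| ^ p) μ) (hνp : Integrable (fun y => |y| ^ p) ν) :
    Integrable (fun z : ℝ × ℝ => |z.1 - z.2| ^ p) π := by
  have h₁ := (memLp_id_of_integrable_abs_rpow hp hμp).comp_measurePreserving
    (⟨measurable_fst, hπ.1⟩ : MeasurePreserving Prod.fst π μ)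
  have h₂ := (memLp_id_of_integrable_abs_rpow hp hνp).comp_measurePreserving
    (⟨measurable_snd, hπ.2⟩ : MeasurePreserving Prod.snd π ν)
  simpa [ENNReal.toReal_ofReal hp.le] using
    (h₁.sub h₂).integrable_norm_rpow (ENNReal.ofReal_pos.2 hp).ne' ENNReal.ofReal_ne_top

section Quantile

variable {μ : Measure ℝ} [IsProbabilityMeasure μ]

lemma quantile_le_iff {t : ℝ} (ht : t ∈ Ioo 0 1) {x : ℝ} : quantile μ t ≤ x ↔ t ≤ cdf μ x := by
  set S := {x : ℝ | t ≤ cdf μ x}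
  have hS : quantile μ t = sInf S := by simp only [quantile, S, cdf_eq_real, measureReal_def]
  have hne : S.Nonempty := ((tendsto_cdf_atTop μ).eventually_const_le ht.2).exists
  have hbdd : BddBelow S := by
    obtain ⟨x₀, hx₀⟩ := eventually_atBot.1 ((tendsto_cdf_atBot μ).eventually_lt_const ht.1)
    exact ⟨x₀, fun s hs => le_of_not_gt fun hsx => (hx₀ s hsx.le).not_ge hs⟩
  -- `S` contains its infimum because `cdf μ` is right-continuous.
  have hmem : sInf S ∈ S := by
    refine ge_of_tendsto (((cdf μ).right_continuous _).mono Ioi_subset_Ici_self)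
      (eventually_nhdsWithin_of_forall fun x hx => ?_)
    obtain ⟨s, hs, hsx⟩ := exists_lt_of_csInf_lt hne hx
    exact hs.trans ((cdf μ).mono hsx.le)
  rw [hS]
  exact ⟨fun h => hmem.trans ((cdf μ).mono h), fun h => csInf_le hbdd h⟩

lemma lt_quantile_iff {t : ℝ} (ht : t ∈ Ioo 0 1) {x : ℝ} : x < quantile μ t ↔ cdf μ x < t := by
  simpa only [not_le] using (quantile_le_iff ht).not

lemma monotoneOn_quantile : MonotoneOn (quantile μ) (Ioo 0 1) := fun _ hs _ ht hst =>
  (quantile_le_iff hs).2 (hst.trans ((quantile_le_iff ht).1 le_rfl))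

lemma aemeasurable_quantile : AEMeasurable (quantile μ) (volume.restrict (Ioo 0 1)) :=
  aemeasurable_restrict_of_monotoneOn measurableSet_Ioo monotoneOn_quantile

end Quantile

lemma volume_Ioc_inter_Ioo_zero_one {a b : ℝ} (ha : 0 ≤ a) (hb : b ≤ 1) :
    volume (Ioc a b ∩ Ioo 0 1) = ENNReal.ofReal (b - a) := by
  have : Ioc a b ∩ Ioo 0 1 = Ioc a b \ {1} := by
    ext t
    simp only [mem_inter_iff, mem_Ioc, mem_Ioo, Set.mem_sdiff, mem_singleton_iff]
    constructor
    · rintro ⟨h, -, h1⟩; exact ⟨h, h1.ne⟩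
    · rintro ⟨⟨hat, htb⟩, h1⟩
      exact ⟨⟨hat, htb⟩, ha.trans_lt hat, lt_of_le_of_ne (htb.trans hb) h1⟩
  rw [this, measure_sdiff_null (Real.volume_singleton), Real.volume_Ioc]

lemma map_quantile (μ : Measure ℝ) [IsProbabilityMeasure μ] :
    (volume.restrict (Ioo 0 1)).map (quantile μ) = μ := by
  refine Measure.ext_of_Iic _ _ fun x => ?_
  have hset : quantile μ ⁻¹' Iic x ∩ Ioo 0 1 = Ioc 0 (cdf μ x) ∩ Ioo 0 1 := by
    ext t
    refine and_congr_left fun ht => ?_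
    simp only [mem_preimage, mem_Iic, mem_Ioc, ht.1, true_and, quantile_le_iff ht]
  rw [Measure.map_apply_of_aemeasurable aemeasurable_quantile measurableSet_Iic,
    Measure.restrict_apply' measurableSet_Ioo, hset,
    volume_Ioc_inter_Ioo_zero_one le_rfl (cdf_le_one μ x), sub_zero, ofReal_cdf]

noncomputable def quantileCoupling (μ ν : Measure ℝ) : Measure (ℝ × ℝ) :=
  (volume.restrict (Ioo 0 1)).map fun t => (quantile μ t, quantile ν t)

section QuantileCoupling

variable {μ ν : Measure ℝ} [IsProbabilityMeasure μ] [IsProbabilityMeasure ν]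

lemma aemeasurable_quantile_prod :
    AEMeasurable (fun t => (quantile μ t, quantile ν t)) (volume.restrict (Ioo 0 1)) :=
  aemeasurable_quantile.prodMk aemeasurable_quantile

lemma isCoupling_quantileCoupling : IsCoupling (quantileCoupling μ ν) μ ν := by
  constructor <;>
    rw [quantileCoupling, AEMeasurable.map_map_of_aemeasurable (by fun_prop)
      aemeasurable_quantile_prod]
  exacts [map_quantile μ, map_quantile ν]

lemma map_swap_quantileCoupling :
    (quantileCoupling μ ν).map Prod.swap = quantileCoupling ν μ :=
  AEMeasurable.map_map_of_aemeasurable measurable_swap.aemeasurable aemeasurable_quantile_prod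

lemma quantileCoupling_Ioi_prod_Iic (c d : ℝ) :
    quantileCoupling μ ν (Ioi c ×ˢ Iic d) = ν (Iic d) - μ (Iic c) := by
  have hset : (fun t => (quantile μ t, quantile ν t)) ⁻¹' (Ioi c ×ˢ Iic d) ∩ Ioo 0 1
      = Ioc (cdf μ c) (cdf ν d) ∩ Ioo 0 1 := by
    ext t
    refine and_congr_left fun ht => ?_
    simp only [mem_preimage, mem_prod, mem_Ioi, mem_Iic, mem_Ioc, lt_quantile_iff ht,
      quantile_le_iff ht]
  rw [quantileCoupling, Measure.map_apply_of_aemeasurable aemeasurable_quantile_prod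
      (measurableSet_Ioi.prod measurableSet_Iic), Measure.restrict_apply' measurableSet_Ioo, hset,
    volume_Ioc_inter_Ioo_zero_one (cdf_nonneg μ c) (cdf_le_one ν d),
    ENNReal.ofReal_sub _ (cdf_nonneg μ c), ofReal_cdf, ofReal_cdf]

end QuantileCoupling

lemma setLIntegral_Ico_ofReal_mul_sub_rpow {p : ℝ} (hp : 0 < p) {x y : ℝ} (hyx : y ≤ x) :
    ∫⁻ a in Ico y x, ENNReal.ofReal (p * (x - a) ^ (p - 1)) = ENNReal.ofReal ((x - y) ^ p) := by
  have hint : IntervalIntegrable (fun a => p * (x - a) ^ (p - 1)) volume y x := by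
    have := (intervalIntegral.intervalIntegrable_rpow' (a := 0) (b := x - y)
      (by linarith : -1 < p - 1)).comp_sub_left x
    simpa using (this.const_mul p).symm
  have hnn : 0 ≤ᵐ[volume.restrict (Ioc y x)] fun a => p * (x - a) ^ (p - 1) :=
    ae_restrict_of_forall_mem measurableSet_Ioc fun a ha =>
      mul_nonneg hp.le (Real.rpow_nonneg (sub_nonneg.2 ha.2) _)
  rw [setLIntegral_congr Ico_ae_eq_Ioc, ← ofReal_integral_eq_lintegral_ofReal hint.1 hnn,
    ← intervalIntegral.integral_of_le hyx, intervalIntegral.integral_const_mul,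
    intervalIntegral.integral_comp_sub_left (fun u => u ^ (p - 1)), sub_self,
    integral_rpow (Or.inl (by linarith)), sub_add_cancel, Real.zero_rpow hp.ne', sub_zero,
    mul_div_cancel₀ _ hp.ne']

lemma continuous_const_mul_rpow_sub_one {p : ℝ} (hp : 1 ≤ p) :
    Continuous fun v : ℝ => p * v ^ (p - 1) :=
  continuous_const.mul (Real.continuous_rpow_const (by linarith))

section PosPartRpow

variable {p : ℝ} (hp : 1 ≤ p)

/-- At `p = 1` the convention `0 ^ 0 = 1` produces the jump of the right derivative at `0`. -/
noncomputable def rightDerivPosPartRpow : StieltjesFunction ℝ where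
  toFun u := if 0 ≤ u then p * u ^ (p - 1) else 0
  mono' u v huv := by
    have hp' : 0 ≤ p - 1 := by linarith
    by_cases hu : 0 ≤ u
    · simp only [hu, hu.trans huv, if_true]
      gcongr
    · simp only [hu, if_false]
      split_ifs <;> positivity
  right_continuous' u := by
    by_cases hu : 0 ≤ u
    · exact (continuous_const_mul_rpow_sub_one hp).continuousWithinAt.congr
        (fun v hv => if_pos (hu.trans hv)) (if_pos hu)
    · refine (continuousAt_const.congr (f := fun _ => (0 : ℝ)) ?_).continuousWithinAt
      filter_upwards [Iio_mem_nhds (not_le.1 hu)] with v hv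
      exact (if_neg (not_le.2 hv)).symm

lemma rightDerivPosPartRpow_measure_Iio (u : ℝ) :
    (rightDerivPosPartRpow hp).measure (Iio u)
      = (Ioi 0).indicator (fun v => ENNReal.ofReal (p * v ^ (p - 1))) u := by
  set F := rightDerivPosPartRpow hp
  have hF : ∀ v, F v = if 0 ≤ v then p * v ^ (p - 1) else 0 := fun _ => rfl
  have hbot : Tendsto F atBot (𝓝 0) :=
    tendsto_const_nhds.congr' (eventually_atBot.2 ⟨-1, fun v hv => by
      rw [hF, if_neg (by linarith)]⟩)
  rw [F.measure_Iio hbot, sub_zero]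
  by_cases hu : 0 < u
  · have hFu : (fun v : ℝ => p * v ^ (p - 1)) =ᶠ[𝓝 u] F := by
      filter_upwards [Ioi_mem_nhds hu] with v hv using (if_pos (le_of_lt hv)).symm
    have hFcont : ContinuousAt F u := (continuous_const_mul_rpow_sub_one hp).continuousAt.congr hFu
    rw [indicator_of_mem (mem_Ioi.2 hu),
      leftLim_eq_of_tendsto (hFcont.tendsto.mono_left nhdsWithin_le_nhds), hF, if_pos hu.le]
  · rw [indicator_of_notMem (mt mem_Ioi.1 hu), leftLim_eq_of_tendsto (y := 0), ENNReal.ofReal_zero]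
    refine tendsto_const_nhds.congr' (eventually_nhdsWithin_of_forall fun v hv => ?_)
    rw [hF, if_neg (by simp only [mem_Iio] at hv; linarith)]

noncomputable def rpowLayerMeasure : Measure (ℝ × ℝ) :=
  volume.prod (rightDerivPosPartRpow hp).measure

instance : SFinite (rpowLayerMeasure hp) := inferInstanceAs (SFinite (volume.prod _))

lemma rpowLayerMeasure_apply (x y : ℝ) :
    rpowLayerMeasure hp {w | (x, y) ∈ Ioi (w.1 + w.2) ×ˢ Iic w.1}
      = ENNReal.ofReal (max (x - y) 0 ^ p) := by
  have hmeas : MeasurableSet {w : ℝ × ℝ | (x, y) ∈ Ioi (w.1 + w.2) ×ˢ Iic w.1} :=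
    (measurableSet_lt (by fun_prop) measurable_const).inter
      (measurableSet_le measurable_const measurable_fst)
  have hsection : ∀ a, (rightDerivPosPartRpow hp).measure
      (Prod.mk a ⁻¹' {w | (x, y) ∈ Ioi (w.1 + w.2) ×ˢ Iic w.1})
      = (Ico y x).indicator (fun a => ENNReal.ofReal (p * (x - a) ^ (p - 1))) a := by
    intro a
    by_cases hya : y ≤ a
    · have : Prod.mk a ⁻¹' {w | (x, y) ∈ Ioi (w.1 + w.2) ×ˢ Iic w.1} = Iio (x - a) := by
        ext r
        simp only [mem_preimage, mem_ofPred_eq, mem_prod, mem_Ioi, mem_Iic, hya, and_true,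
          mem_Iio]
        constructor <;> intro h <;> linarith
      simp only [this, rightDerivPosPartRpow_measure_Iio, indicator_apply, mem_Ioi, mem_Ico,
        hya, true_and, sub_pos]
    · have : Prod.mk a ⁻¹' {w | (x, y) ∈ Ioi (w.1 + w.2) ×ˢ Iic w.1} = ∅ := by
        ext r
        simp [hya]
      rw [this, measure_empty, indicator_of_notMem fun h => hya h.1]
  rw [rpowLayerMeasure, Measure.prod_apply hmeas, lintegral_congr hsection,
    lintegral_indicator measurableSet_Ico]
  rcases le_total y x with hyx | hxy
  · rw [setLIntegral_Ico_ofReal_mul_sub_rpow (by linarith) hyx, max_eq_left (sub_nonneg.2 hyx)]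
  · rw [Ico_eq_empty (not_lt.2 hxy), Measure.restrict_empty, lintegral_zero_measure,
      max_eq_right (sub_nonpos.2 hxy), Real.zero_rpow (by linarith), ENNReal.ofReal_zero]

lemma lintegral_ofReal_posPart_sub_rpow (ρ : Measure (ℝ × ℝ)) [SFinite ρ] :
    ∫⁻ z, ENNReal.ofReal (max (z.1 - z.2) 0 ^ p) ∂ρ
      = ∫⁻ w, ρ (Ioi (w.1 + w.2) ×ˢ Iic w.1) ∂rpowLayerMeasure hp := by
  have hS : MeasurableSet {q : (ℝ × ℝ) × (ℝ × ℝ) | q.1 ∈ Ioi (q.2.1 + q.2.2) ×ˢ Iic q.2.1} :=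
    (measurableSet_lt (by fun_prop) (by fun_prop)).inter (measurableSet_le (by fun_prop)
      (by fun_prop))
  simp_rw [← rpowLayerMeasure_apply hp]
  exact (Measure.prod_apply hS).symm.trans (Measure.prod_apply_symm hS)

end PosPartRpow

lemma abs_rpow_eq_posPart_rpow_add {p : ℝ} (hp : 0 < p) (u : ℝ) :
    |u| ^ p = max u 0 ^ p + max (-u) 0 ^ p := by
  rcases le_total 0 u with hu | hu
  · rw [abs_of_nonneg hu, max_eq_left hu, max_eq_right (neg_nonpos.2 hu),
      Real.zero_rpow hp.ne', add_zero]
  · rw [abs_of_nonpos hu, max_eq_right hu, max_eq_left (neg_nonneg.2 hu),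
      Real.zero_rpow hp.ne', zero_add]

section Comparison

variable {p : ℝ} {μ ν : Measure ℝ} [IsProbabilityMeasure μ] [IsProbabilityMeasure ν]
  {π : Measure (ℝ × ℝ)}

lemma lintegral_posPart_sub_rpow_quantileCoupling_le (hp : 1 ≤ p) (hπ : IsCoupling π μ ν) :
    ∫⁻ z, ENNReal.ofReal (max (z.1 - z.2) 0 ^ p) ∂quantileCoupling μ ν
      ≤ ∫⁻ z, ENNReal.ofReal (max (z.1 - z.2) 0 ^ p) ∂π := by
  have := hπ.isProbabilityMeasure
  have := (isCoupling_quantileCoupling (μ := μ) (ν := ν)).isProbabilityMeasure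
  rw [lintegral_ofReal_posPart_sub_rpow hp, lintegral_ofReal_posPart_sub_rpow hp]
  refine lintegral_mono fun w => ?_
  rw [quantileCoupling_Ioi_prod_Iic, ← compl_Iic]
  exact hπ.sub_le_apply_compl_prod _ measurableSet_Iic

lemma lintegral_abs_sub_rpow_quantileCoupling_le (hp : 1 ≤ p) (hπ : IsCoupling π μ ν) :
    ∫⁻ z, ENNReal.ofReal (|z.1 - z.2| ^ p) ∂quantileCoupling μ ν
      ≤ ∫⁻ z, ENNReal.ofReal (|z.1 - z.2| ^ p) ∂π := by
  have hsplit : ∀ ρ : Measure (ℝ × ℝ), ∫⁻ z, ENNReal.ofReal (|z.1 - z.2| ^ p) ∂ρ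
      = ∫⁻ z, ENNReal.ofReal (max (z.1 - z.2) 0 ^ p) ∂ρ
        + ∫⁻ z, ENNReal.ofReal (max (z.1 - z.2) 0 ^ p) ∂ρ.map Prod.swap := by
    intro ρ
    rw [lintegral_map (by fun_prop) measurable_swap, ← lintegral_add_left (by fun_prop)]
    refine lintegral_congr fun z => ?_
    rw [abs_rpow_eq_posPart_rpow_add (by linarith), ENNReal.ofReal_add (by positivity)
      (by positivity), neg_sub]
    rfl
  rw [hsplit, hsplit, map_swap_quantileCoupling]
  exact add_le_add (lintegral_posPart_sub_rpow_quantileCoupling_le hp hπ)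
    (lintegral_posPart_sub_rpow_quantileCoupling_le hp hπ.swap)

lemma integral_abs_sub_rpow_quantileCoupling_le (hp : 1 ≤ p) (hπ : IsCoupling π μ ν)
    (hμp : Integrable (fun x => |x| ^ p) μ) (hνp : Integrable (fun y => |y| ^ p) ν) :
    ∫ z, |z.1 - z.2| ^ p ∂quantileCoupling μ ν ≤ ∫ z, |z.1 - z.2| ^ p ∂π := by
  have hcost_nonneg : ∀ ρ : Measure (ℝ × ℝ), 0 ≤ᵐ[ρ] fun z => |z.1 - z.2| ^ p :=
    fun _ => Eventually.of_forall fun _ => by positivity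
  rw [integral_eq_lintegral_of_nonneg_ae (hcost_nonneg _) (by fun_prop (disch := linarith)),
    integral_eq_lintegral_of_nonneg_ae (hcost_nonneg _) (by fun_prop (disch := linarith))]
  exact ENNReal.toReal_mono (hπ.integrable_abs_sub_rpow (by linarith) hμp hνp).lintegral_lt_top.ne
    (lintegral_abs_sub_rpow_quantileCoupling_le hp hπ)

end Comparison

/-- For probability measures on `ℝ` with finite `p`-th moments, the `p`-Wasserstein distance
equals the `L^p` distance between quantile functions. -/
theorem wasserstein_eq_quantile_distance
    (p : ℝ) (hp : 1 ≤ p)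
    (μ ν : Measure ℝ) [IsProbabilityMeasure μ] [IsProbabilityMeasure ν]
    (hμp : Integrable (fun x => |x| ^ p) μ) (hνp : Integrable (fun y => |y| ^ p) ν) :
    (sInf {r : ℝ | ∃ π : Measure (ℝ × ℝ), IsCoupling π μ ν ∧
        r = ∫ z, |z.1 - z.2| ^ p ∂π}) ^ (1 / p)
      = (∫ t in Ioo (0 : ℝ) 1, |quantile μ t - quantile ν t| ^ p) ^ (1 / p) := by
  have hquantile : ∫ t in Ioo (0 : ℝ) 1, |quantile μ t - quantile ν t| ^ p
      = ∫ z, |z.1 - z.2| ^ p ∂quantileCoupling μ ν :=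
    (integral_map (f := fun z : ℝ × ℝ => |z.1 - z.2| ^ p) aemeasurable_quantile_prod
      (by fun_prop (disch := linarith))).symm
  rw [hquantile]
  congr 1
  exact IsLeast.csInf_eq ⟨⟨_, isCoupling_quantileCoupling, rfl⟩,
    fun _ ⟨π, hπ, hr⟩ => hr ▸ integral_abs_sub_rpow_quantileCoupling_le hp hπ hμp hνp⟩
end
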